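/- arXiv:0912.3200 — 3 statements merged into one kernel-verified Lean document; each statement's English description precedes it below -/
import Mathlib

section
/- Let G = (B, W, E) be a finite bipartite graph with black vertex set B = {b_1, …, b_n} and white vertex set W = {w_1, …, w_n} (enumerated once and for all), and let w : E → ℂ^× be a nowhere-zero edge weight function. For a perfect matching M of G, let π_M be the permutation of {1, …, n} with M = {{b_i, w_{π_M(i)}} : 1 ≤ i ≤ n}, and set t(M) = sign(π_M) · ∏_{e ∈ M} w(e). Suppose M and N are perfect matchings of G whose symmetric difference is a single cycle C of length 2k, and orient C so that each edge of M ∩ C is traversed from its black endpoint to its white endpoint. Then t(M)/t(N) = c(C), where c(C) = (−1)^{k+1} · (∏_{e ∈ C_+} w(e)) / (∏_{e ∈ C_−} w(e)), C_+ being the set of edges of C traversed from black to white (that is, M ∩ C) and C_− the set of edges of C traversed from white to black (that is, N ∩ C). -/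
/-!
STATEMENT 5: Let `G = (B, W, E)` be a finite bipartite graph with black vertices
`b₁, …, bₙ` and white vertices `w₁, …, wₙ` and a nowhere-zero weight `w : E → ℂˣ`.
A perfect matching `M` corresponds to a permutation `π` of `{1, …, n}` via
`M = {{b_i, w_{π i}}}`, and `t(M) = sign π · ∏_{e ∈ M} w e`.  If the symmetric
difference of two perfect matchings `M` (with permutation `π`) and `N` (with
permutation `σ`) is a single cycle `C` of length `2k` (equivalently, `π σ⁻¹` is a
single cycle, `k` being the number of indices where `π` and `σ` differ), oriented so
that the edges of `M ∩ C` go from black to white, then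
`t(M)/t(N) = c(C) = (-1)^{k+1} (∏_{e ∈ C₊} w e) / (∏_{e ∈ C₋} w e)`,
where `C₊ = M \ N` (black-to-white edges) and `C₋ = N \ M` (white-to-black edges).

Edges are modelled as pairs `(i, j) : Fin n × Fin n`, the pair `(i, j)` representing
the edge `{b_i, w_j}`.
-/

theorem matching_ratio_eq_kasteleyn_curvature
    (n : ℕ) (E : Finset (Fin n × Fin n)) (w : Fin n × Fin n → ℂ)
    (hw : ∀ e ∈ E, w e ≠ 0)
    (π σ : Equiv.Perm (Fin n))
    (hM : ∀ i, (i, π i) ∈ E) (hN : ∀ i, (i, σ i) ∈ E)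
    (hcyc : (π * σ⁻¹).IsCycle)
    (S : Finset (Fin n)) (hS : S = Finset.univ.filter fun i => π i ≠ σ i)
    (k : ℕ) (hk : k = S.card) :
    (((Equiv.Perm.sign π : ℤ) : ℂ) * ∏ i : Fin n, w (i, π i)) /
        (((Equiv.Perm.sign σ : ℤ) : ℂ) * ∏ i : Fin n, w (i, σ i)) =
      (-1 : ℂ) ^ (k + 1) *
        ((∏ i ∈ S, w (i, π i)) / (∏ i ∈ S, w (i, σ i))) := by
  classical
  -- support of π * σ⁻¹ is the image of S under σ
  have hsupp : (π * σ⁻¹).support = S.image σ := by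
    ext i
    simp only [Equiv.Perm.mem_support, Finset.mem_image, hS, Finset.mem_filter,
      Finset.mem_univ, true_and]
    constructor
    · intro h
      exact ⟨σ⁻¹ i, by simpa using h, by simp⟩
    · rintro ⟨j, hj, rfl⟩
      simpa using hj
  have hcard : (π * σ⁻¹).support.card = k := by
    rw [hsupp, Finset.card_image_of_injective _ σ.injective, hk]
  -- sign computation
  have hsign : (Equiv.Perm.sign π : ℤ) = (-1) ^ (k + 1) * (Equiv.Perm.sign σ : ℤ) := by
    have h1 := hcyc.sign
    rw [hcard] at h1
    have h2 : Equiv.Perm.sign (π * σ⁻¹) = Equiv.Perm.sign π * Equiv.Perm.sign σ := by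
      rw [map_mul, Equiv.Perm.sign_inv]
    rw [h2] at h1
    have h3 : Equiv.Perm.sign π * Equiv.Perm.sign σ * Equiv.Perm.sign σ
        = -(-1) ^ k * Equiv.Perm.sign σ := by rw [h1]
    rw [mul_assoc, ← sq, Int.units_sq, mul_one] at h3
    have := congrArg (fun u : ℤˣ => (u : ℤ)) h3
    simpa [pow_succ, mul_comm, mul_assoc, mul_left_comm] using this
  -- off S the two products agree
  have hoff : ∀ i ∈ Sᶜ, w (i, π i) = w (i, σ i) := by
    intro i hi
    rw [hS] at hi
    simp only [Finset.mem_compl, Finset.mem_filter, Finset.mem_univ, true_and,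
      not_not] at hi
    rw [hi]
  have hsplitπ : (∏ i : Fin n, w (i, π i)) = (∏ i ∈ S, w (i, π i)) * ∏ i ∈ Sᶜ, w (i, σ i) := by
    rw [← Finset.prod_mul_prod_compl S]
    exact congrArg _ (Finset.prod_congr rfl hoff)
  have hsplitσ : (∏ i : Fin n, w (i, σ i)) = (∏ i ∈ S, w (i, σ i)) * ∏ i ∈ Sᶜ, w (i, σ i) := by
    rw [← Finset.prod_mul_prod_compl S]
  -- nonvanishing
  have hq : (∏ i ∈ Sᶜ, w (i, σ i)) ≠ 0 :=
    Finset.prod_ne_zero_iff.2 fun i _ => hw _ (hN i)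
  have hr : (∏ i ∈ S, w (i, σ i)) ≠ 0 :=
    Finset.prod_ne_zero_iff.2 fun i _ => hw _ (hN i)
  have hb : ((Equiv.Perm.sign σ : ℤ) : ℂ) ≠ 0 := by
    rcases Int.units_eq_one_or (Equiv.Perm.sign σ) with h | h <;> simp [h]
  rw [hsplitπ, hsplitσ]
  have hsignC : ((Equiv.Perm.sign π : ℤ) : ℂ)
      = (-1) ^ (k + 1) * ((Equiv.Perm.sign σ : ℤ) : ℂ) := by
    rw [hsign]; push_cast; ring
  rw [hsignC]
  field_simp
end

section
/- Let G = (B, W, E) be a finite connected bipartite graph and let w : E → ℂ^× be a nowhere-zero edge weight function such that for every cycle C of G (with either choice of orientation) the Kasteleyn curvature satisfies c(C) ∈ {1, −1}. Then w is equivalent to a weight function taking values in {1, −1}: there exists a function f : B ∪ W → ℂ^× such that for every edge e = {u, v} ∈ E one has f(u) · f(v) · w(e) ∈ {1, −1}. -/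
/-!
Give each dart `d` the weight `a d = w d.edge` if it leaves a black vertex and `(w d.edge)⁻¹`
otherwise. The product of `a` along a cycle is its Kasteleyn curvature up to sign, so it squares
to `1`. Since a dart and its reverse have inverse weights, the square of the product along a walk
does not change when the walk is shortcut to a path (`Walk.bypass`) by cutting off cycles and
backtracks; hence the product along every closed walk squares to `1` as well. Fixing a walk
`p v` from a root to each vertex, the potential `g v = ∏_{p v} a` therefore satisfies
`(g u · a (u, v) · (g v)⁻¹)² = 1` for every dart, and the gauge `f v = (g v)^{±1}`, with the sign
given by the colour of `v`, makes every edge weight `±1`.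
-/

open SimpleGraph

namespace SimpleGraph.Walk

variable {V M : Type*} {G : SimpleGraph V} [CommMonoid M] (a : G.Dart → M)

def dartProd {u v : V} (p : G.Walk u v) : M := (p.darts.map a).prod

@[simp] lemma dartProd_nil {u : V} : (nil : G.Walk u u).dartProd a = 1 := rfl

@[simp] lemma dartProd_cons {u v w : V} (h : G.Adj u v) (p : G.Walk v w) :
    (cons h p).dartProd a = a ⟨(u, v), h⟩ * p.dartProd a := rfl

@[simp] lemma dartProd_append {u v w : V} (p : G.Walk u v) (q : G.Walk v w) :
    (p.append q).dartProd a = p.dartProd a * q.dartProd a := by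
  simp [dartProd]

section
variable {a} (ha : ∀ d, a d * a d.symm = 1)
include ha

lemma dartProd_mul_dartProd_reverse {u v : V} (p : G.Walk u v) :
    p.dartProd a * p.reverse.dartProd a = 1 := by
  induction p with
  | nil => simp
  | cons h p ih =>
    have hd : a ⟨(_, _), h⟩ * a ⟨(_, _), h.symm⟩ = 1 := ha ⟨(_, _), h⟩
    simp only [reverse_cons, dartProd_append, dartProd_cons, dartProd_nil, mul_one]
    calc _ = a ⟨(_, _), h⟩ * a ⟨(_, _), h.symm⟩ * (p.dartProd a * p.reverse.dartProd a) := by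
          ac_rfl
      _ = 1 := by rw [hd, ih, one_mul]

variable (hcyc : ∀ u (c : G.Walk u u), c.IsCycle → c.dartProd a ^ 2 = 1)
include hcyc

lemma sq_dartProd_cons_of_isPath {u v : V} (h : G.Adj u v) {p : G.Walk v u} (hp : p.IsPath) :
    (cons h p).dartProd a ^ 2 = 1 := by
  by_cases he : s(u, v) ∈ p.edges
  · rw [Sym2.eq_swap] at he
    rw [hp.eq_adj_toWalk_of_mem_edges he]
    simp only [Adj.toWalk, dartProd_cons, dartProd_nil, mul_one]
    have hd : a ⟨(u, v), h⟩ * a ⟨(v, u), h.symm⟩ = 1 := ha ⟨(u, v), h⟩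
    rw [hd, one_pow]
  · exact hcyc u _ ((cons_isCycle_iff p h).2 ⟨hp, he⟩)

lemma sq_dartProd_bypass [DecidableEq V] {u v : V} (p : G.Walk u v) :
    p.bypass.dartProd a ^ 2 = p.dartProd a ^ 2 := by
  induction p with
  | nil => rfl
  | cons h p ih =>
    rw [bypass]
    split_ifs with hs
    · have hloop := sq_dartProd_cons_of_isPath ha hcyc h ((bypass_isPath p).takeUntil hs)
      calc (p.bypass.dropUntil _ hs).dartProd a ^ 2
          = (cons h (p.bypass.takeUntil _ hs)).dartProd a ^ 2 *
              (p.bypass.dropUntil _ hs).dartProd a ^ 2 := by rw [hloop, one_mul]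
        _ = (cons h p.bypass).dartProd a ^ 2 := by
          rw [← mul_pow, ← dartProd_append, cons_append, take_spec]
        _ = (cons h p).dartProd a ^ 2 := by simp only [dartProd_cons, mul_pow, ih]
    · simp only [dartProd_cons, mul_pow, ih]

lemma sq_dartProd_of_loop {u : V} (p : G.Walk u u) : p.dartProd a ^ 2 = 1 := by
  classical
  rw [← sq_dartProd_bypass ha hcyc, eq_nil_iff_nil.2 (isPath_iff_nil.1 (bypass_isPath p))]
  simp

end

end SimpleGraph.Walk

theorem SimpleGraph.Connected.exists_sq_potential {V K : Type*} {G : SimpleGraph V}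
    [CommGroupWithZero K] (hconn : G.Connected) {a : G.Dart → K}
    (ha : ∀ d, a d * a d.symm = 1)
    (hcyc : ∀ u (c : G.Walk u u), c.IsCycle → c.dartProd a ^ 2 = 1) :
    ∃ g : V → K, (∀ v, g v ≠ 0) ∧ ∀ d : G.Dart, (g d.fst * a d * (g d.snd)⁻¹) ^ 2 = 1 := by
  obtain ⟨r⟩ := hconn.nonempty
  let p : ∀ v, G.Walk r v := fun v => (hconn.preconnected r v).some
  have hinv : ∀ v, (p v).reverse.dartProd a = ((p v).dartProd a)⁻¹ := fun v =>
    eq_inv_of_mul_eq_one_right (Walk.dartProd_mul_dartProd_reverse ha _)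
  refine ⟨fun v => (p v).dartProd a,
    fun v => left_ne_zero_of_mul_eq_one (Walk.dartProd_mul_dartProd_reverse ha _), fun d => ?_⟩
  simpa [hinv, mul_assoc] using
    Walk.sq_dartProd_of_loop ha hcyc ((p d.fst).append (.cons d.adj (p d.snd).reverse))

theorem List.prod_map_filter_not_div_prod_map_filter {α K : Type*} [DivisionCommMonoid K]
    (l : List α) (p : α → Bool) (g : α → K) :
    ((l.filter fun x => !p x).map g).prod / ((l.filter p).map g).prod =
      (l.map fun x => if p x then (g x)⁻¹ else g x).prod := by
  induction l with
  | nil => simp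
  | cons x l ih =>
    cases hx : p x
    · simp [hx, ← ih, mul_div_assoc]
    · simp [hx, ← ih, div_eq_mul_inv, mul_assoc, mul_comm]

section Kasteleyn

variable {V K : Type*} {G : SimpleGraph V} [Field K] (col : V → Bool) (w : Sym2 V → K)

def kasteleynDartWeight (d : G.Dart) : K :=
  if col d.fst then (w d.edge)⁻¹ else w d.edge

lemma kasteleynDartWeight_mul_symm (hbip : ∀ u v, G.Adj u v → col u ≠ col v)
    (hw : ∀ e ∈ G.edgeSet, w e ≠ 0) (d : G.Dart) :
    kasteleynDartWeight col w d * kasteleynDartWeight col w d.symm = 1 := by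
  have hne := hw _ d.edge_mem
  have hcol := hbip _ _ d.adj
  unfold kasteleynDartWeight
  cases h1 : col d.fst <;> cases h2 : col d.snd <;> simp_all

lemma dartProd_kasteleynDartWeight {u v : V} (p : G.Walk u v) :
    p.dartProd (kasteleynDartWeight col w) =
      ((p.darts.filter fun d => !col d.fst).map fun d => w d.edge).prod /
        ((p.darts.filter fun d => col d.fst).map fun d => w d.edge).prod :=
  (List.prod_map_filter_not_div_prod_map_filter _ _ _).symm

end Kasteleyn

theorem kasteleyn_pm_one_curvature_gauge_equiv_general
    {V : Type*} (G : SimpleGraph V) (hconn : G.Connected)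
    (col : V → Bool) (hbip : ∀ u v, G.Adj u v → col u ≠ col v)
    (w : Sym2 V → ℂ) (hw : ∀ e ∈ G.edgeSet, w e ≠ 0)
    (hcurv : ∀ (v : V) (p : G.Walk v v), p.IsCycle →
      (-1 : ℂ) ^ (p.length / 2 + 1) *
          (((p.darts.filter fun d => !col d.fst).map fun d => w d.edge).prod /
            ((p.darts.filter fun d => col d.fst).map fun d => w d.edge).prod)
        ∈ ({1, -1} : Set ℂ)) :
    ∃ f : V → ℂ, (∀ v, f v ≠ 0) ∧
      ∀ u v, G.Adj u v → f u * f v * w s(u, v) ∈ ({1, -1} : Set ℂ) := by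
  have hcyc : ∀ u (c : G.Walk u u), c.IsCycle → c.dartProd (kasteleynDartWeight col w) ^ 2 = 1 :=
    fun u c hc => by
      have := sq_eq_one_iff.2 (hcurv u c hc)
      rwa [← dartProd_kasteleynDartWeight, mul_pow, ← pow_mul, pow_mul', neg_one_sq, one_pow,
        one_mul] at this
  obtain ⟨g, hg0, hg⟩ :=
    hconn.exists_sq_potential (kasteleynDartWeight_mul_symm col w hbip hw) hcyc
  refine ⟨fun v => if col v then (g v)⁻¹ else g v, fun v => by by_cases hv : col v <;> simp [hv, hg0], ?_⟩
  intro u v huv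
  wlog hu : col u = false generalizing u v
  · have hv : col v = false := by simpa [hu] using (hbip u v huv).symm
    simpa only [mul_comm (_ : ℂ) (if col v then _ else _), Sym2.eq_swap] using this v u huv.symm hv
  have hv : col v = true := by simpa [hu] using (hbip u v huv).symm
  have := hg ⟨(u, v), huv⟩
  simp only [kasteleynDartWeight, hu, hv, Dart.edge_mk, Bool.false_eq_true, if_true,
    if_false] at this ⊢
  rw [mul_right_comm] at this
  exact sq_eq_one_iff.1 this

theorem kasteleyn_pm_one_curvature_gauge_equiv
    {V : Type*} [Fintype V] (G : SimpleGraph V) (hconn : G.Connected)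
    (col : V → Bool) (hbip : ∀ u v, G.Adj u v → col u ≠ col v)
    (w : Sym2 V → ℂ) (hw : ∀ e ∈ G.edgeSet, w e ≠ 0)
    (hcurv : ∀ (v : V) (p : G.Walk v v), p.IsCycle →
      (-1 : ℂ) ^ (p.length / 2 + 1) *
          (((p.darts.filter fun d => !col d.fst).map fun d => w d.edge).prod /
            ((p.darts.filter fun d => col d.fst).map fun d => w d.edge).prod)
        ∈ ({1, -1} : Set ℂ)) :
    ∃ f : V → ℂ, (∀ v, f v ≠ 0) ∧
      ∀ u v, G.Adj u v → f u * f v * w s(u, v) ∈ ({1, -1} : Set ℂ) :=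
  kasteleyn_pm_one_curvature_gauge_equiv_general G hconn col hbip w hw hcurv
end

section
/- Let G = (V, E) be a finite simple graph and, for each edge e, let x_e be a nonzero real number. For a spin configuration σ : V → {1, −1} and an edge e = {u, v}, write x_e^{σ(u)σ(v)} for x_e if σ(u) = σ(v) and x_e^{−1} otherwise. Then Σ_{σ : V → {1,−1}} ∏_{e = {u,v} ∈ E} x_e^{σ(u)σ(v)} = 2^{|V|} · Σ_{E' ∈ 𝓔(G)} ∏_{e ∈ E'} (x_e − x_e^{−1})/2 · ∏_{e ∈ E \ E'} (x_e + x_e^{−1})/2, where 𝓔(G) is the set of even subsets of E. -/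
/-!
STATEMENT 8: For a finite simple graph `G = (V, E)` with a nonzero real variable
`x_e` for each edge, the Ising partition function
`∑_{σ : V → {1,-1}} ∏_{e={u,v}} x_e^{σ(u)σ(v)}`  (where `x_e^{σ(u)σ(v)}` means `x_e`
if `σ(u) = σ(v)` and `x_e⁻¹` otherwise) equals
`2^{|V|} ∑_{E' even} ∏_{e ∈ E'} (x_e - x_e⁻¹)/2 · ∏_{e ∈ E∖E'} (x_e + x_e⁻¹)/2`,
summing over the even subsets `E'` of `E` (every vertex having even degree in `(V, E')`).
-/

variable {V : Type*} [Fintype V] [DecidableEq V]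

/-- The weight `x_e^{σ(u)σ(v)}` of an edge `e = {u,v}`: it is `x_e` if
`σ(u) = σ(v)` and `x_e⁻¹` otherwise; this is symmetric in `u, v`, hence descends to
`Sym2 V`. -/
noncomputable def spinWeight (x : Sym2 V → ℝ) (σ : V → ℤ) : Sym2 V → ℝ :=
  Sym2.lift ⟨fun u v => if σ u = σ v then x s(u, v) else (x s(u, v))⁻¹,
    fun u v => by simp only [Sym2.eq_swap]; exact if_congr eq_comm rfl rfl⟩

/-- sign product of an edge -/
def sgnZ (σ : V → ℤ) : Sym2 V → ℤ :=
  Sym2.lift ⟨fun u v => σ u * σ v, fun u v => mul_comm _ _⟩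

omit [Fintype V] [DecidableEq V] in
lemma spinWeight_eq (x : Sym2 V → ℝ) (σ : V → ℤ) (hσ : ∀ v, σ v = -1 ∨ σ v = 1)
    (e : Sym2 V) :
    spinWeight x σ e =
      (x e - (x e)⁻¹) / 2 * ((sgnZ σ e : ℤ) : ℝ) + (x e + (x e)⁻¹) / 2 := by
  induction e using Sym2.ind with
  | _ u v =>
    simp only [spinWeight, sgnZ, Sym2.lift_mk]
    rcases hσ u with hu | hu <;> rcases hσ v with hv | hv <;>
      rw [hu, hv] <;> norm_num <;> ring

lemma prod_sgn (σ : V → ℤ) (E' : Finset (Sym2 V)) (h : ∀ e ∈ E', ¬ e.IsDiag) :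
    ∏ e ∈ E', sgnZ σ e = ∏ v : V, σ v ^ (E'.filter (fun e => v ∈ e)).card := by
  induction E' using Finset.induction_on with
  | empty => simp
  | @insert a s ha ih =>
    have hcard : ∀ v : V, ((insert a s).filter (fun e => v ∈ e)).card =
        (s.filter (fun e => v ∈ e)).card + (if v ∈ a then 1 else 0) := by
      intro v
      rw [Finset.filter_insert]
      split_ifs with hv
      · rw [Finset.card_insert_of_notMem (fun hc => ha (Finset.mem_of_mem_filter a hc))]
      · rw [Nat.add_zero]
    rw [Finset.prod_insert ha, ih (fun e he => h e (Finset.mem_insert_of_mem he))]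
    have key : ∏ v : V, σ v ^ (if v ∈ a then 1 else 0) = sgnZ σ a := by
      induction a using Sym2.ind with
      | _ u w =>
        have hne : u ≠ w := by
          have := h s(u, w) (Finset.mem_insert_self _ _)
          simpa [Sym2.mk_isDiag_iff] using this
        have h2 : ∀ v : V, σ v ^ (if v ∈ s(u, w) then 1 else 0) =
            if v ∈ ({u, w} : Finset V) then σ v else 1 := by
          intro v
          simp only [Sym2.mem_iff, Finset.mem_insert, Finset.mem_singleton]
          split_ifs <;> simp
        rw [Finset.prod_congr rfl (fun v _ => h2 v)]
        rw [Finset.prod_ite_mem, Finset.univ_inter, Finset.prod_pair hne]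
        simp [sgnZ]
    calc sgnZ σ a * ∏ v : V, σ v ^ (s.filter (fun e => v ∈ e)).card
        = (∏ v : V, σ v ^ (if v ∈ a then 1 else 0)) *
            ∏ v : V, σ v ^ (s.filter (fun e => v ∈ e)).card := by rw [key]
      _ = ∏ v : V, σ v ^ ((s.filter (fun e => v ∈ e)).card + (if v ∈ a then 1 else 0)) := by
          rw [← Finset.prod_mul_distrib]
          exact Finset.prod_congr rfl fun v _ => by rw [pow_add, mul_comm]
      _ = _ := (Finset.prod_congr rfl fun v _ => by rw [hcard v]).symm

lemma sum_prod_pow (d : V → ℕ) :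
    ∑ σ ∈ Fintype.piFinset (fun _ : V => ({-1, 1} : Finset ℤ)),
        ∏ v : V, ((σ v : ℝ)) ^ d v =
      if (∀ v, Even (d v)) then (2 : ℝ) ^ Fintype.card V else 0 := by
  rw [← Finset.prod_univ_sum (fun _ : V => ({-1, 1} : Finset ℤ))
    (fun v (t : ℤ) => ((t : ℝ)) ^ d v)]
  have hfac : ∀ v : V, (∑ t ∈ ({-1, 1} : Finset ℤ), ((t : ℝ)) ^ d v) =
      if Even (d v) then 2 else 0 := by
    intro v
    rw [Finset.sum_pair (by norm_num : (-1 : ℤ) ≠ 1)]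
    push_cast
    rcases Nat.even_or_odd (d v) with hv | hv
    · rw [if_pos hv, hv.neg_one_pow, one_pow]; norm_num
    · rw [if_neg (by simpa using hv), hv.neg_one_pow, one_pow]; norm_num
  rw [Finset.prod_congr rfl fun v _ => hfac v]
  by_cases h : ∀ v, Even (d v)
  · rw [if_pos h, Finset.prod_congr rfl fun v _ => if_pos (h v), Finset.prod_const,
      Finset.card_univ]
  · push_neg at h
    obtain ⟨v, hv⟩ := h
    rw [if_neg (fun hc => hv (hc v))]
    exact Finset.prod_eq_zero (Finset.mem_univ v) (by rw [if_neg hv])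

theorem ising_partition_function_eq_even_subset_generating_function
    (G : SimpleGraph V) [DecidableRel G.Adj]
    (x : Sym2 V → ℝ) (hx : ∀ e ∈ G.edgeSet, x e ≠ 0) :
    ∑ σ : V → ({-1, 1} : Finset ℤ),
        ∏ e ∈ G.edgeFinset, spinWeight x (fun v => (σ v : ℤ)) e =
      2 ^ Fintype.card V *
        ∑ E' ∈ G.edgeFinset.powerset.filter
            (fun E' => ∀ v : V, Even (E'.filter (fun e => v ∈ e)).card),
          (∏ e ∈ E', (x e - (x e)⁻¹) / 2) *
            ∏ e ∈ G.edgeFinset \ E', (x e + (x e)⁻¹) / 2 := by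
  classical
  have step1 : ∑ σ : V → ({-1, 1} : Finset ℤ),
      ∏ e ∈ G.edgeFinset, spinWeight x (fun v => (σ v : ℤ)) e =
      ∑ σ ∈ Fintype.piFinset (fun _ : V => ({-1, 1} : Finset ℤ)),
        ∏ e ∈ G.edgeFinset, spinWeight x σ e := by
    refine Finset.sum_bij (fun σ _ => fun v => (σ v : ℤ)) ?_ ?_ ?_ ?_
    · intro σ _
      simp only [Fintype.mem_piFinset]
      intro v; exact (σ v).2
    · intro σ₁ _ σ₂ _ hσ
      funext v
      exact Subtype.ext (congrFun hσ v)
    · intro g hg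
      refine ⟨fun v => ⟨g v, Fintype.mem_piFinset.mp hg v⟩, Finset.mem_univ _, rfl⟩
    · intro σ _; rfl
  rw [step1]
  -- expand each spin weight and the product over edges
  have step2 : ∀ σ ∈ Fintype.piFinset (fun _ : V => ({-1, 1} : Finset ℤ)),
      ∏ e ∈ G.edgeFinset, spinWeight x σ e =
      ∑ E' ∈ G.edgeFinset.powerset,
        (∏ e ∈ E', (x e - (x e)⁻¹) / 2 * ((sgnZ σ e : ℤ) : ℝ)) *
          ∏ e ∈ G.edgeFinset \ E', (x e + (x e)⁻¹) / 2 := by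
    intro σ hσ
    have hσ' : ∀ v, σ v = -1 ∨ σ v = 1 := by
      intro v
      have := Fintype.mem_piFinset.mp hσ v
      simpa using this
    rw [Finset.prod_congr rfl fun e _ => spinWeight_eq x σ hσ' e]
    exact Finset.prod_add _ _ _
  rw [Finset.sum_congr rfl step2, Finset.sum_comm]
  -- evaluate the inner sum over σ for each E'
  have step3 : ∀ E' ∈ G.edgeFinset.powerset,
      ∑ σ ∈ Fintype.piFinset (fun _ : V => ({-1, 1} : Finset ℤ)),
        (∏ e ∈ E', (x e - (x e)⁻¹) / 2 * ((sgnZ σ e : ℤ) : ℝ)) *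
          ∏ e ∈ G.edgeFinset \ E', (x e + (x e)⁻¹) / 2 =
      (if (∀ v : V, Even ((E'.filter (fun e => v ∈ e)).card)) then
          (2 : ℝ) ^ Fintype.card V else 0) *
        ((∏ e ∈ E', (x e - (x e)⁻¹) / 2) *
          ∏ e ∈ G.edgeFinset \ E', (x e + (x e)⁻¹) / 2) := by
    intro E' hE'
    have hsub := Finset.mem_powerset.mp hE'
    have hdiag : ∀ e ∈ E', ¬ e.IsDiag := fun e he =>
      G.not_isDiag_of_mem_edgeSet (SimpleGraph.mem_edgeFinset.mp (hsub he))
    have hterm : ∀ σ : V → ℤ,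
        (∏ e ∈ E', (x e - (x e)⁻¹) / 2 * ((sgnZ σ e : ℤ) : ℝ)) *
          ∏ e ∈ G.edgeFinset \ E', (x e + (x e)⁻¹) / 2 =
        (∏ v : V, ((σ v : ℝ)) ^ (E'.filter (fun e => v ∈ e)).card) *
          ((∏ e ∈ E', (x e - (x e)⁻¹) / 2) *
            ∏ e ∈ G.edgeFinset \ E', (x e + (x e)⁻¹) / 2) := by
      intro σ
      rw [Finset.prod_mul_distrib]
      have : ∏ e ∈ E', ((sgnZ σ e : ℤ) : ℝ) =
          ∏ v : V, ((σ v : ℝ)) ^ (E'.filter (fun e => v ∈ e)).card := by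
        rw [← Int.cast_prod, prod_sgn σ E' hdiag]
        push_cast
        rfl
      rw [this]; ring
    rw [Finset.sum_congr rfl fun σ _ => hterm σ, ← Finset.sum_mul, sum_prod_pow]
  rw [Finset.sum_congr rfl step3]
  -- collect the indicator into a filter
  rw [Finset.mul_sum, Finset.sum_filter]
  refine Finset.sum_congr rfl fun E' _ => ?_
  split_ifs with h
  · ring
  · ring
end
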